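/- arXiv:1709.03335 — 4 statements merged into one kernel-verified Lean document; each statement's English description precedes it below -/
import Mathlib

section
/- Let P₁ ⊆ ℝⁿ and P₂ ⊆ ℝᵐ be polytopes each containing 0 in its (topological) interior. Then (0,0) is an interior point of P₁ ⊛ P₂, and a subset F with F ≠ P₁ ⊛ P₂ is a face of the polytope P₁ ⊛ P₂ if and only if F = F₁ ⊛ F₂ (namely F = convexHull ℝ ((F₁ × {0}) ∪ ({0} × F₂))) for some faces F₁ of P₁ and F₂ of P₂ with F₁ ≠ P₁ and F₂ ≠ P₂. Moreover, if F₁ is defined by the valid inequality φ(x) ≤ 1 on P₁ and F₂ by ψ(y) ≤ 1 on P₂, then F₁ ⊛ F₂ is defined by the valid inequality φ(x) + ψ(y) ≤ 1 on P₁ ⊛ P₂. -/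
/-- A face of a convex set `P` cut out by a valid linear inequality. -/
def IsFaceOf {V : Type*} [AddCommGroup V] [Module ℝ V] (F P : Set V) : Prop :=
  ∃ (φ : V →ₗ[ℝ] ℝ) (c : ℝ), (∀ x ∈ P, φ x ≤ c) ∧ F = {x ∈ P | φ x = c}

/-- The direct joint `X ⊛ Y` of `X ⊆ ℝⁿ` and `Y ⊆ ℝᵐ`. -/
def joint {n m : ℕ} (X : Set (EuclideanSpace ℝ (Fin n))) (Y : Set (EuclideanSpace ℝ (Fin m))) :
    Set (EuclideanSpace ℝ (Fin n) × EuclideanSpace ℝ (Fin m)) :=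
  convexHull ℝ ((fun x => (x, (0 : EuclideanSpace ℝ (Fin m)))) '' X ∪
    (fun y => ((0 : EuclideanSpace ℝ (Fin n)), y)) '' Y)

open Set

section aux

variable {n m : ℕ}

lemma mem_joint_of_combo {P₁ : Set (EuclideanSpace ℝ (Fin n))}
    {P₂ : Set (EuclideanSpace ℝ (Fin m))} {x : EuclideanSpace ℝ (Fin n)}
    {y : EuclideanSpace ℝ (Fin m)} {a b : ℝ}
    (hx : x ∈ P₁) (hy : y ∈ P₂) (ha : 0 ≤ a) (hb : 0 ≤ b) (hab : a + b = 1) :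
    ((a • x, b • y) : EuclideanSpace ℝ (Fin n) × EuclideanSpace ℝ (Fin m)) ∈ joint P₁ P₂ := by
  have h1 : ((x, 0) : EuclideanSpace ℝ (Fin n) × EuclideanSpace ℝ (Fin m)) ∈ joint P₁ P₂ :=
    subset_convexHull ℝ _ (Or.inl ⟨x, hx, rfl⟩)
  have h2 : ((0, y) : EuclideanSpace ℝ (Fin n) × EuclideanSpace ℝ (Fin m)) ∈ joint P₁ P₂ :=
    subset_convexHull ℝ _ (Or.inr ⟨y, hy, rfl⟩)
  have := (convex_convexHull ℝ _) h1 h2 ha hb hab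
  simpa [joint, Prod.smul_mk, Prod.mk_add_mk] using this

set_option maxHeartbeats 1000000 in
lemma mem_joint_iff {P₁ : Set (EuclideanSpace ℝ (Fin n))}
    {P₂ : Set (EuclideanSpace ℝ (Fin m))} (h₁ : Convex ℝ P₁) (h₂ : Convex ℝ P₂)
    (hne₁ : P₁.Nonempty) (hne₂ : P₂.Nonempty)
    {w : EuclideanSpace ℝ (Fin n) × EuclideanSpace ℝ (Fin m)} :
    w ∈ joint P₁ P₂ ↔ ∃ x ∈ P₁, ∃ y ∈ P₂, ∃ a b : ℝ,
      0 ≤ a ∧ 0 ≤ b ∧ a + b = 1 ∧ w = (a • x, b • y) := by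
  constructor
  · intro hw
    rw [joint, Convex.convexHull_union (h₁.linear_image (LinearMap.inl ℝ _ _))
        (h₂.linear_image (LinearMap.inr ℝ _ _)) (hne₁.image _) (hne₂.image _)] at hw
    rw [mem_convexJoin] at hw
    obtain ⟨p, ⟨x, hx, rfl⟩, q, ⟨y, hy, rfl⟩, a, b, ha, hb, hab, hw⟩ := hw
    exact ⟨x, hx, y, hy, a, b, ha, hb, hab, by
      rw [← hw]; simp [Prod.smul_mk, Prod.mk_add_mk]⟩
  · rintro ⟨x, hx, y, hy, a, b, ha, hb, hab, rfl⟩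
    exact mem_joint_of_combo hx hy ha hb hab

/-- Validity and equality-set description for the joint face. -/
lemma jointC {P₁ : Set (EuclideanSpace ℝ (Fin n))} {P₂ : Set (EuclideanSpace ℝ (Fin m))}
    (h₁ : Convex ℝ P₁) (h₂ : Convex ℝ P₂)
    (h0₁ : (0 : EuclideanSpace ℝ (Fin n)) ∈ P₁) (h0₂ : (0 : EuclideanSpace ℝ (Fin m)) ∈ P₂)
    (φ : EuclideanSpace ℝ (Fin n) →ₗ[ℝ] ℝ) (ψ : EuclideanSpace ℝ (Fin m) →ₗ[ℝ] ℝ)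
    (hφ : ∀ x ∈ P₁, φ x ≤ 1) (hψ : ∀ y ∈ P₂, ψ y ≤ 1) :
    (∀ w ∈ joint P₁ P₂, φ w.1 + ψ w.2 ≤ 1) ∧
      joint {x ∈ P₁ | φ x = 1} {y ∈ P₂ | ψ y = 1} =
        {w ∈ joint P₁ P₂ | φ w.1 + ψ w.2 = 1} := by
  set Λ : (EuclideanSpace ℝ (Fin n) × EuclideanSpace ℝ (Fin m)) →ₗ[ℝ] ℝ :=
    φ.comp (LinearMap.fst ℝ _ _) + ψ.comp (LinearMap.snd ℝ _ _) with hΛ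
  have hΛ_apply : ∀ w, Λ w = φ w.1 + ψ w.2 := fun w => rfl
  have hvalid : ∀ w ∈ joint P₁ P₂, φ w.1 + ψ w.2 ≤ 1 := by
    intro w hw
    have hsub : joint P₁ P₂ ⊆ {w | Λ w ≤ 1} := by
      apply convexHull_min _ (convex_halfSpace_le (LinearMap.isLinear Λ) 1)
      rintro p (⟨x, hx, rfl⟩ | ⟨y, hy, rfl⟩)
      · simpa [hΛ_apply] using hφ x hx
      · simpa [hΛ_apply] using hψ y hy
    exact hsub hw
  refine ⟨hvalid, ?_⟩
  apply Set.Subset.antisymm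
  · -- joint F₁ F₂ ⊆ equality set
    apply convexHull_min _ ((convex_convexHull ℝ _).inter
      (convex_hyperplane (LinearMap.isLinear Λ) 1))
    rintro p (⟨x, ⟨hx, hx1⟩, rfl⟩ | ⟨y, ⟨hy, hy1⟩, rfl⟩)
    · exact ⟨subset_convexHull ℝ _ (Or.inl ⟨x, hx, rfl⟩), by simpa [hΛ_apply] using hx1⟩
    · exact ⟨subset_convexHull ℝ _ (Or.inr ⟨y, hy, rfl⟩), by simpa [hΛ_apply] using hy1⟩
  · rintro w ⟨hw, heq⟩
    obtain ⟨x, hx, y, hy, a, b, ha, hb, hab, rfl⟩ :=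
      (mem_joint_iff h₁ h₂ ⟨0, h0₁⟩ ⟨0, h0₂⟩).mp hw
    simp only [map_smul, smul_eq_mul] at heq
    have hax : a * φ x ≤ a := by
      have := hφ x hx; nlinarith
    have hby : b * ψ y ≤ b := by
      have := hψ y hy; nlinarith
    have hax' : a * φ x = a := by linarith
    have hby' : b * ψ y = b := by linarith
    rcases eq_or_lt_of_le ha with ha0 | ha0
    · -- a = 0, so b = 1
      have hb1 : b = 1 := by linarith
      have hyF : ψ y = 1 := by rw [hb1] at hby'; linarith
      have : ((a • x, b • y) : EuclideanSpace ℝ (Fin n) × EuclideanSpace ℝ (Fin m))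
          = (0, y) := by rw [← ha0, hb1]; simp
      rw [this]
      exact subset_convexHull ℝ _ (Or.inr ⟨y, ⟨hy, hyF⟩, rfl⟩)
    rcases eq_or_lt_of_le hb with hb0 | hb0
    · have ha1 : a = 1 := by linarith
      have hxF : φ x = 1 := by rw [ha1] at hax'; linarith
      have : ((a • x, b • y) : EuclideanSpace ℝ (Fin n) × EuclideanSpace ℝ (Fin m))
          = (x, 0) := by rw [← hb0, ha1]; simp
      rw [this]
      exact subset_convexHull ℝ _ (Or.inl ⟨x, ⟨hx, hxF⟩, rfl⟩)
    · have hxF : φ x = 1 := by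
        field_simp at hax' ⊢
        exact mul_left_cancel₀ (ne_of_gt ha0) (by linarith)
      have hyF : ψ y = 1 := mul_left_cancel₀ (ne_of_gt hb0) (by linarith)
      exact mem_joint_of_combo (P₁ := {x ∈ P₁ | φ x = 1}) (P₂ := {y ∈ P₂ | ψ y = 1})
        ⟨hx, hxF⟩ ⟨hy, hyF⟩ ha hb hab

/-- If `0` is interior and the face cut out by `φ ≤ c` is proper, then `c > 0`. -/
lemma pos_of_proper {E : Type*} [NormedAddCommGroup E] [NormedSpace ℝ E] {P : Set E}
    (h0 : (0 : E) ∈ interior P) (φ : E →ₗ[ℝ] ℝ) {c : ℝ}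
    (hv : ∀ x ∈ P, φ x ≤ c) (hne : {x ∈ P | φ x = c} ≠ P) : 0 < c := by
  have hc0 : 0 ≤ c := by simpa using hv 0 (interior_subset h0)
  rcases hc0.lt_or_eq with h | h
  · exact h
  exfalso
  obtain ⟨ε, hε, hball⟩ := Metric.isOpen_iff.mp isOpen_interior 0 h0
  have hφ0 : ∀ v : E, φ v = 0 := by
    intro v
    rcases eq_or_ne v 0 with rfl | hv0
    · simp
    have hnorm : 0 < ‖v‖ := norm_pos_iff.mpr hv0
    set t : ℝ := ε / (2 * ‖v‖) with ht
    have htpos : 0 < t := by positivity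
    have hmem : ∀ s : E, ‖s‖ < ε → s ∈ P := fun s hs =>
      interior_subset (hball (by simpa [Metric.mem_ball, dist_zero_right] using hs))
    have hsize : ‖t • v‖ < ε := by
      rw [norm_smul, Real.norm_eq_abs, abs_of_pos htpos, ht]
      rw [div_mul_eq_mul_div, mul_comm]
      rw [div_lt_iff₀ (by positivity)]
      nlinarith
    have h1 : φ (t • v) ≤ 0 := by rw [h]; exact hv _ (hmem _ hsize)
    have h2 : φ (-(t • v)) ≤ 0 := by
      rw [h]; exact hv _ (hmem _ (by simpa using hsize))
    rw [map_neg] at h2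
    have : φ (t • v) = 0 := le_antisymm h1 (by linarith)
    rw [map_smul, smul_eq_mul] at this
    rcases mul_eq_zero.mp this with h' | h'
    · exact absurd h' (ne_of_gt htpos)
    · exact h'
  apply hne
  ext x
  simp only [mem_setOf_eq]
  exact ⟨fun h => h.1, fun hx => ⟨hx, by rw [hφ0 x, h]⟩⟩

end aux

/-- Faces of the direct joint of two polytopes having `0` in their interiors. -/
theorem stmt1 {n m : ℕ} (V₁ : Finset (EuclideanSpace ℝ (Fin n)))
    (V₂ : Finset (EuclideanSpace ℝ (Fin m)))
    (P₁ : Set (EuclideanSpace ℝ (Fin n))) (P₂ : Set (EuclideanSpace ℝ (Fin m)))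
    (hP₁ : P₁ = convexHull ℝ (V₁ : Set (EuclideanSpace ℝ (Fin n))))
    (hP₂ : P₂ = convexHull ℝ (V₂ : Set (EuclideanSpace ℝ (Fin m))))
    (h0₁ : (0 : EuclideanSpace ℝ (Fin n)) ∈ interior P₁)
    (h0₂ : (0 : EuclideanSpace ℝ (Fin m)) ∈ interior P₂) :
    ((0 : EuclideanSpace ℝ (Fin n) × EuclideanSpace ℝ (Fin m)) ∈ interior (joint P₁ P₂)) ∧
    (∀ F : Set (EuclideanSpace ℝ (Fin n) × EuclideanSpace ℝ (Fin m)), F ≠ joint P₁ P₂ →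
      (IsFaceOf F (joint P₁ P₂) ↔
        ∃ F₁ F₂, IsFaceOf F₁ P₁ ∧ IsFaceOf F₂ P₂ ∧ F₁ ≠ P₁ ∧ F₂ ≠ P₂ ∧ F = joint F₁ F₂)) ∧
    (∀ (F₁ : Set (EuclideanSpace ℝ (Fin n))) (F₂ : Set (EuclideanSpace ℝ (Fin m)))
      (φ : EuclideanSpace ℝ (Fin n) →ₗ[ℝ] ℝ) (ψ : EuclideanSpace ℝ (Fin m) →ₗ[ℝ] ℝ),
      (∀ x ∈ P₁, φ x ≤ 1) → F₁ = {x ∈ P₁ | φ x = 1} →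
      (∀ y ∈ P₂, ψ y ≤ 1) → F₂ = {y ∈ P₂ | ψ y = 1} →
      (∀ w ∈ joint P₁ P₂, φ w.1 + ψ w.2 ≤ 1) ∧
        joint F₁ F₂ = {w ∈ joint P₁ P₂ | φ w.1 + ψ w.2 = 1}) := by
  have hc₁ : Convex ℝ P₁ := hP₁ ▸ convex_convexHull ℝ _
  have hc₂ : Convex ℝ P₂ := hP₂ ▸ convex_convexHull ℝ _
  have hz₁ : (0 : EuclideanSpace ℝ (Fin n)) ∈ P₁ := interior_subset h0₁
  have hz₂ : (0 : EuclideanSpace ℝ (Fin m)) ∈ P₂ := interior_subset h0₂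
  -- Part A: interior
  have partA : (0 : EuclideanSpace ℝ (Fin n) × EuclideanSpace ℝ (Fin m))
      ∈ interior (joint P₁ P₂) := by
    obtain ⟨ε₁, hε₁, hb₁⟩ := Metric.isOpen_iff.mp isOpen_interior 0 h0₁
    obtain ⟨ε₂, hε₂, hb₂⟩ := Metric.isOpen_iff.mp isOpen_interior 0 h0₂
    set r := min ε₁ ε₂ / 2 with hr
    have hrpos : 0 < r := by positivity
    apply mem_interior.mpr
    refine ⟨Metric.ball 0 r, ?_, Metric.isOpen_ball, Metric.mem_ball_self hrpos⟩
    rintro ⟨u, v⟩ huv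
    rw [← ball_prod_same] at huv
    obtain ⟨hu, hv⟩ := huv
    have hu' : ‖u‖ < r := by simpa [Metric.mem_ball, dist_zero_right] using hu
    have hv' : ‖v‖ < r := by simpa [Metric.mem_ball, dist_zero_right] using hv
    have h2u : (2 : ℝ) • u ∈ P₁ := by
      refine interior_subset (hb₁ ?_)
      rw [Metric.mem_ball, dist_zero_right, norm_smul, Real.norm_ofNat]
      have hle : r ≤ ε₁ / 2 := by
        rw [hr]; gcongr; exact min_le_left _ _
      nlinarith [norm_nonneg u]
    have h2v : (2 : ℝ) • v ∈ P₂ := by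
      refine interior_subset (hb₂ ?_)
      rw [Metric.mem_ball, dist_zero_right, norm_smul, Real.norm_ofNat]
      have hle : r ≤ ε₂ / 2 := by
        rw [hr]; gcongr; exact min_le_right _ _
      nlinarith [norm_nonneg v]
    have := mem_joint_of_combo h2u h2v (a := (1:ℝ)/2) (b := (1:ℝ)/2)
      (by norm_num) (by norm_num) (by norm_num)
    simpa [smul_smul] using this
  refine ⟨partA, ?_, ?_⟩
  · -- Part B
    intro F hFne
    constructor
    · rintro ⟨Φ, c, hv, hF⟩
      have hcpos : 0 < c := pos_of_proper partA Φ hv (hF ▸ hFne)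
      set φ : EuclideanSpace ℝ (Fin n) →ₗ[ℝ] ℝ :=
        c⁻¹ • (Φ.comp (LinearMap.inl ℝ _ _)) with hφdef
      set ψ : EuclideanSpace ℝ (Fin m) →ₗ[ℝ] ℝ :=
        c⁻¹ • (Φ.comp (LinearMap.inr ℝ _ _)) with hψdef
      have hφ : ∀ x ∈ P₁, φ x ≤ 1 := by
        intro x hx
        have : Φ (x, 0) ≤ c := hv _ (subset_convexHull ℝ _ (Or.inl ⟨x, hx, rfl⟩))
        simp only [hφdef, LinearMap.smul_apply, LinearMap.coe_comp, Function.comp_apply,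
          LinearMap.inl_apply, smul_eq_mul]
        rw [inv_mul_le_iff₀ hcpos]; simpa using this
      have hψ : ∀ y ∈ P₂, ψ y ≤ 1 := by
        intro y hy
        have : Φ (0, y) ≤ c := hv _ (subset_convexHull ℝ _ (Or.inr ⟨y, hy, rfl⟩))
        simp only [hψdef, LinearMap.smul_apply, LinearMap.coe_comp, Function.comp_apply,
          LinearMap.inr_apply, smul_eq_mul]
        rw [inv_mul_le_iff₀ hcpos]; simpa using this
      obtain ⟨-, heq⟩ := jointC hc₁ hc₂ hz₁ hz₂ φ ψ hφ hψ
      refine ⟨{x ∈ P₁ | φ x = 1}, {y ∈ P₂ | ψ y = 1}, ⟨φ, 1, hφ, rfl⟩, ⟨ψ, 1, hψ, rfl⟩,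
        ?_, ?_, ?_⟩
      · intro h
        have : φ (0 : EuclideanSpace ℝ (Fin n)) = 1 := (h.symm.subset hz₁).2
        simp at this
      · intro h
        have : ψ (0 : EuclideanSpace ℝ (Fin m)) = 1 := (h.symm.subset hz₂).2
        simp at this
      · rw [heq, hF]
        ext w
        have hΦw : Φ (w.1, 0) + Φ (0, w.2) = Φ w := by
          rw [← map_add]; congr 1; simp [Prod.ext_iff]
        simp only [mem_setOf_eq, hφdef, hψdef, LinearMap.smul_apply, LinearMap.coe_comp,
          Function.comp_apply, LinearMap.inl_apply, LinearMap.inr_apply, smul_eq_mul,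
          ← mul_add, hΦw, inv_mul_eq_one₀ (ne_of_gt hcpos)]
        exact and_congr_right fun _ => eq_comm
    · rintro ⟨F₁, F₂, ⟨φ₁, c₁, hv₁, hF₁⟩, ⟨ψ₂, c₂, hv₂, hF₂⟩, hne₁, hne₂, rfl⟩
      have hc₁pos : 0 < c₁ := pos_of_proper h0₁ φ₁ hv₁ (hF₁ ▸ hne₁)
      have hc₂pos : 0 < c₂ := pos_of_proper h0₂ ψ₂ hv₂ (hF₂ ▸ hne₂)
      set φ := c₁⁻¹ • φ₁ with hφdef
      set ψ := c₂⁻¹ • ψ₂ with hψdef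
      have hφ : ∀ x ∈ P₁, φ x ≤ 1 := by
        intro x hx
        simp only [hφdef, LinearMap.smul_apply, smul_eq_mul]
        rw [inv_mul_le_iff₀ hc₁pos]; simpa using hv₁ x hx
      have hψ : ∀ y ∈ P₂, ψ y ≤ 1 := by
        intro y hy
        simp only [hψdef, LinearMap.smul_apply, smul_eq_mul]
        rw [inv_mul_le_iff₀ hc₂pos]; simpa using hv₂ y hy
      have hF₁' : F₁ = {x ∈ P₁ | φ x = 1} := by
        rw [hF₁]; ext x
        simp only [mem_setOf_eq, hφdef, LinearMap.smul_apply, smul_eq_mul,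
          inv_mul_eq_one₀ (ne_of_gt hc₁pos)]
        exact and_congr_right fun _ => eq_comm
      have hF₂' : F₂ = {y ∈ P₂ | ψ y = 1} := by
        rw [hF₂]; ext y
        simp only [mem_setOf_eq, hψdef, LinearMap.smul_apply, smul_eq_mul,
          inv_mul_eq_one₀ (ne_of_gt hc₂pos)]
        exact and_congr_right fun _ => eq_comm
      obtain ⟨hval, heq⟩ := jointC hc₁ hc₂ hz₁ hz₂ φ ψ hφ hψ
      refine ⟨φ.comp (LinearMap.fst ℝ _ _) + ψ.comp (LinearMap.snd ℝ _ _), 1, ?_, ?_⟩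
      · intro w hw; simpa using hval w hw
      · rw [hF₁', hF₂', heq]
        ext w; simp [mem_setOf_eq]
  · -- Part C
    intro F₁ F₂ φ ψ hφ hF₁ hψ hF₂
    obtain ⟨hval, heq⟩ := jointC hc₁ hc₂ hz₁ hz₂ φ ψ hφ hψ
    exact ⟨hval, by rw [hF₁, hF₂, heq]⟩
end

section
/- Let G be a finite group acting on ℝⁿ by linear isometries via ρ : G → O(n), acting freely on the unit sphere S^{n-1}, let v₀ ∈ S^{n-1} with orbit V = G·v₀ spanning ℝⁿ, and let P = convexHull ℝ V be the orbit polytope. Then for every g ∈ G the image ρ(g)(F) of any face F of P is again a face of P, and for every nonempty proper face F of P and every g ∈ G with g ≠ 1 one has ρ(g)(F) ≠ F; that is, G acts freely on the set of nonempty proper faces of P. -/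
/-- the group `G` maps faces of the orbit polytope to faces, and it acts freely
on the set of nonempty proper faces. -/
theorem stmt7 {n : ℕ} (G : Type) [Group G] [Finite G]
    (ρ : G →* (EuclideanSpace ℝ (Fin n) ≃ₗᵢ[ℝ] EuclideanSpace ℝ (Fin n)))
    (hfree : ∀ g : G, g ≠ 1 → ∀ v : EuclideanSpace ℝ (Fin n), ‖v‖ = 1 → ρ g v ≠ v)
    (v₀ : EuclideanSpace ℝ (Fin n)) (hv₀ : ‖v₀‖ = 1)
    (V : Set (EuclideanSpace ℝ (Fin n))) (hV : V = Set.range fun g : G => ρ g v₀)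
    (hspan : Submodule.span ℝ V = ⊤)
    (P : Set (EuclideanSpace ℝ (Fin n))) (hP : P = convexHull ℝ V) :
    (∀ (g : G) (F : Set (EuclideanSpace ℝ (Fin n))), IsFaceOf F P → IsFaceOf (ρ g '' F) P) ∧
    (∀ F : Set (EuclideanSpace ℝ (Fin n)), IsFaceOf F P → F.Nonempty → F ≠ P →
      ∀ g : G, g ≠ 1 → ρ g '' F ≠ F) := by
  classical
  have := Fintype.ofFinite G
  -- ρ g maps V onto V
  have hVim : ∀ g : G, ρ g '' V = V := by
    intro g
    rw [hV]
    ext x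
    simp only [Set.mem_image, Set.mem_range]
    constructor
    · rintro ⟨y, ⟨h, rfl⟩, rfl⟩
      exact ⟨g * h, by simp [map_mul]⟩
    · rintro ⟨h, rfl⟩
      refine ⟨ρ (g⁻¹ * h) v₀, ⟨g⁻¹ * h, rfl⟩, ?_⟩
      have : ρ g * ρ (g⁻¹ * h) = ρ h := by rw [← map_mul]; group
      calc ρ g (ρ (g⁻¹ * h) v₀) = (ρ g * ρ (g⁻¹ * h)) v₀ := rfl
        _ = ρ h v₀ := by rw [this]
  -- ρ g maps P onto P
  have hPim : ∀ g : G, ρ g '' P = P := by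
    intro g
    rw [hP]
    have : ρ g '' (convexHull ℝ V)
        = ((ρ g).toLinearEquiv : EuclideanSpace ℝ (Fin n) →ₗ[ℝ] EuclideanSpace ℝ (Fin n)) '' (convexHull ℝ V) := rfl
    rw [this, LinearMap.image_convexHull]
    congr 1
    exact hVim g
  have part1 : ∀ (g : G) (F : Set (EuclideanSpace ℝ (Fin n))), IsFaceOf F P → IsFaceOf (ρ g '' F) P := by
    rintro g F ⟨φ, c, hφ, hF⟩
    refine ⟨φ.comp ((ρ g).symm.toLinearEquiv : EuclideanSpace ℝ (Fin n) →ₗ[ℝ] EuclideanSpace ℝ (Fin n)), c, ?_, ?_⟩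
    · intro x hx
      have : (ρ g).symm x ∈ P := by
        rw [← hPim g] at hx
        obtain ⟨y, hy, rfl⟩ := hx
        simpa using hy
      exact hφ _ this
    · ext x
      simp only [Set.mem_image, Set.mem_setOf_eq, LinearMap.comp_apply,
        LinearEquiv.coe_coe, LinearIsometryEquiv.coe_toLinearEquiv]
      constructor
      · rintro ⟨y, hy, rfl⟩
        rw [hF] at hy
        obtain ⟨hyP, hyφ⟩ := hy
        refine ⟨?_, by simpa using hyφ⟩
        rw [← hPim g]; exact ⟨y, hyP, rfl⟩
      · rintro ⟨hxP, hxφ⟩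
        refine ⟨(ρ g).symm x, ?_, by simp⟩
        rw [hF]
        refine ⟨?_, hxφ⟩
        rw [← hPim g] at hxP
        obtain ⟨y, hy, rfl⟩ := hxP
        simpa using hy
  refine ⟨part1, ?_⟩
  rintro F ⟨φ, c, hφ, hF⟩ hne hFP g hg hgF
  -- the centroid of the orbit is fixed by ρ g, hence is 0
  set s : EuclideanSpace ℝ (Fin n) := ∑ h : G, ρ h v₀ with hs
  have hgs : ρ g s = s := by
    rw [hs, map_sum]
    exact Fintype.sum_equiv (Equiv.mulLeft g) _ _ (fun h => by
      simp [map_mul])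
  have hfix : ∀ x : EuclideanSpace ℝ (Fin n), ρ g x = x → x = 0 := by
    intro x hx
    by_contra hx0
    have hn : ‖(‖x‖⁻¹ • x : EuclideanSpace ℝ (Fin n))‖ = 1 := by
      simp [norm_smul, abs_of_nonneg, inv_mul_cancel₀ (norm_ne_zero_iff.mpr hx0)]
    exact hfree g hg _ hn (by rw [map_smul, hx])
  have hs0 : s = 0 := hfix s hgs
  -- 0 ∈ P
  have h0P : (0 : EuclideanSpace ℝ (Fin n)) ∈ P := by
    have hmem : Finset.univ.centerMass (fun _ : G => (1 : ℝ)) (fun h : G => ρ h v₀)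
        ∈ convexHull ℝ V := by
      apply Finset.centerMass_mem_convexHull
      · intro i _; norm_num
      · simp [Finset.card_univ]; exact_mod_cast Fintype.card_pos
      · intro i _; rw [hV]; exact ⟨i, rfl⟩
    have : Finset.univ.centerMass (fun _ : G => (1 : ℝ)) (fun h : G => ρ h v₀)
        = (Fintype.card G : ℝ)⁻¹ • s := by
      rw [Finset.centerMass, hs]
      simp [Finset.card_univ]
    rw [this, hs0, smul_zero] at hmem
    rwa [hP]
  have hc0 : 0 ≤ c := by simpa using hφ 0 h0P
  -- c > 0
  have hVP : V ⊆ P := by rw [hP]; exact subset_convexHull ℝ V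
  have hcpos : 0 < c := by
    rcases lt_or_eq_of_le hc0 with h | h
    · exact h
    · exfalso
      apply hFP
      have hzero : ∀ h : G, φ (ρ h v₀) = 0 := by
        have hsum : ∑ h : G, φ (ρ h v₀) = 0 := by
          rw [← map_sum, ← hs, hs0, map_zero]
        intro h
        have := (Finset.sum_eq_zero_iff_of_nonpos (fun i _ => by
          have := hφ (ρ i v₀) (hVP (by rw [hV]; exact ⟨i, rfl⟩))
          linarith)).mp hsum h (Finset.mem_univ h)
        exact this
      have hφ0 : φ = 0 := by
        apply LinearMap.ext
        intro x
        have hx : x ∈ Submodule.span ℝ V := by rw [hspan]; trivial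
        refine Submodule.span_induction (fun y hy => ?_) (by simp)
          (fun a b _ _ ha hb => by simp [ha, hb])
          (fun r a _ ha => by simp [ha]) hx
        rw [hV] at hy
        obtain ⟨i, rfl⟩ := hy
        exact hzero i
      rw [hF, hφ0, ← h]
      simp
  -- the vertex set of F
  have hVfin : V.Finite := by rw [hV]; exact Set.finite_range _
  have hFVfin : (F ∩ V).Finite := hVfin.inter_of_right F
  set T : Finset (EuclideanSpace ℝ (Fin n)) := hFVfin.toFinset with hT
  have hTne : T.Nonempty := by
    obtain ⟨b, hb⟩ := hne
    have hbP : b ∈ P := by rw [hF] at hb; exact hb.1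
    have hbφ : φ b = c := by rw [hF] at hb; exact hb.2
    by_contra hTe
    rw [Finset.not_nonempty_iff_eq_empty] at hTe
    have hempty : F ∩ V = ∅ := by
      rw [← Set.Finite.coe_toFinset hFVfin, ← hT, hTe]; simp
    have hVlt : ∀ x ∈ V, φ x < c := by
      intro x hx
      rcases lt_or_eq_of_le (hφ x (hVP hx)) with h | h
      · exact h
      · exfalso
        have : x ∈ F ∩ V := ⟨by rw [hF]; exact ⟨hVP hx, h⟩, hx⟩
        rw [hempty] at this; exact this
    have : b ∈ {x : EuclideanSpace ℝ (Fin n) | φ x < c} := by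
      rw [hP] at hbP
      exact convexHull_min (fun x hx => hVlt x hx) (convex_halfSpace_lt φ.isLinear c) hbP
    exact absurd hbφ (ne_of_lt this)
  -- barycenter of T
  set b : EuclideanSpace ℝ (Fin n) := (T.card : ℝ)⁻¹ • ∑ x ∈ T, x with hb
  have hTcard : (0 : ℝ) < T.card := by exact_mod_cast Finset.card_pos.mpr hTne
  have hbP : b ∈ P := by
    have hmem : T.centerMass (fun _ : EuclideanSpace ℝ (Fin n) => (1 : ℝ)) id ∈ convexHull ℝ V := by
      apply Finset.centerMass_mem_convexHull
      · intro i _; norm_num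
      · simpa using hTcard
      · intro i hi
        have : i ∈ F ∩ V := by rwa [← Set.Finite.mem_toFinset hFVfin]
        exact this.2
    have : T.centerMass (fun _ : EuclideanSpace ℝ (Fin n) => (1 : ℝ)) id = b := by
      rw [Finset.centerMass, hb]; simp
    rw [this] at hmem
    rwa [hP]
  have hbφ : φ b = c := by
    have hsum : ∀ x ∈ T, φ x = c := by
      intro x hx
      have : x ∈ F ∩ V := by rwa [← Set.Finite.mem_toFinset hFVfin]
      rw [hF] at this
      exact this.1.2
    have h1 : φ (∑ x ∈ T, x) = (T.card : ℝ) * c := by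
      rw [map_sum, Finset.sum_congr rfl hsum, Finset.sum_const, nsmul_eq_mul]
    have h2 : φ b = (T.card : ℝ)⁻¹ * ((T.card : ℝ) * c) := by
      rw [hb, map_smul, h1]
      rfl
    rw [h2, ← mul_assoc, inv_mul_cancel₀ (ne_of_gt hTcard), one_mul]
  -- ρ g fixes T hence b
  have hTim : T.image (ρ g) = T := by
    apply Finset.coe_injective
    rw [Finset.coe_image, Set.Finite.coe_toFinset]
    rw [Set.image_inter (ρ g).injective, hgF, hVim g]
  have hgb : ρ g b = b := by
    rw [hb, map_smul, map_sum]
    congr 1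
    conv_rhs => rw [← hTim]
    exact (Finset.sum_image (f := fun x : EuclideanSpace ℝ (Fin n) => x)
      (fun x _ y _ h => (ρ g).injective h)).symm
  have hb0 : b = 0 := hfix b hgb
  rw [hb0, map_zero] at hbφ
  exact absurd hbφ.symm (ne_of_gt hcpos)
end

section
/- The function f : ℝ → ℝ defined by f(α) = (1/2)·cos(α/2) − cos(2π/3 + α) − 1 satisfies f(0) = 0 and f(α) > 0 for every α ∈ (0, π/3]. -/
open Real

lemma stmt11_key (α : ℝ) :
    (1 / 2) * Real.cos (α / 2) - Real.cos (2 * Real.pi / 3 + α) - 1 =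
      Real.sqrt 3 * Real.sin (α / 2) * Real.cos (α / 2)
        - Real.sin (α / 2) ^ 2 - Real.sin (α / 4) ^ 2 := by
  have hcos23 : Real.cos (2 * Real.pi / 3) = -(1 / 2) := by
    have : (2 : ℝ) * Real.pi / 3 = Real.pi - Real.pi / 3 := by ring
    rw [this, Real.cos_pi_sub, Real.cos_pi_div_three]
  have hsin23 : Real.sin (2 * Real.pi / 3) = Real.sqrt 3 / 2 := by
    have : (2 : ℝ) * Real.pi / 3 = Real.pi - Real.pi / 3 := by ring
    rw [this, Real.sin_pi_sub, Real.sin_pi_div_three]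
  have h1 : Real.cos α = 1 - 2 * Real.sin (α / 2) ^ 2 := by
    have := Real.cos_two_mul (α / 2)
    have h2 := Real.sin_sq_add_cos_sq (α / 2)
    have : Real.cos (2 * (α / 2)) = 2 * Real.cos (α / 2) ^ 2 - 1 := this
    rw [show 2 * (α / 2) = α by ring] at this
    nlinarith
  have h2 : Real.cos (α / 2) = 1 - 2 * Real.sin (α / 4) ^ 2 := by
    have := Real.cos_two_mul (α / 4)
    have h2 := Real.sin_sq_add_cos_sq (α / 4)
    rw [show 2 * (α / 4) = α / 2 by ring] at this
    nlinarith
  have h3 : Real.sin α = 2 * Real.sin (α / 2) * Real.cos (α / 2) := by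
    have := Real.sin_two_mul (α / 2)
    rw [show 2 * (α / 2) = α by ring] at this
    exact this
  rw [Real.cos_add, hcos23, hsin23, h1, h3, h2]
  ring

/-- the function `f(α) = (1/2)cos(α/2) − cos(2π/3 + α) − 1` vanishes at `0` and
is positive on `(0, π/3]`. -/
theorem stmt11 (f : ℝ → ℝ)
    (hf : ∀ α : ℝ, f α = (1 / 2) * Real.cos (α / 2) - Real.cos (2 * Real.pi / 3 + α) - 1) :
    f 0 = 0 ∧ ∀ α : ℝ, 0 < α → α ≤ Real.pi / 3 → 0 < f α := by
  constructor
  · rw [hf 0, stmt11_key]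
    norm_num
  · intro α h0 h1
    rw [hf α, stmt11_key]
    set s2 := Real.sin (α / 2) with hs2d
    set c2 := Real.cos (α / 2) with hc2d
    set s4 := Real.sin (α / 4) with hs4d
    set c4 := Real.cos (α / 4) with hc4d
    have hpi : Real.pi < 3.15 := by
      have := Real.pi_lt_d2
      linarith
    have hpipos := Real.pi_pos
    have hs4pos : 0 < s4 := Real.sin_pos_of_pos_of_lt_pi (by linarith) (by linarith)
    have hs4le : s4 ≤ α / 4 := Real.sin_le (by linarith)
    have hs4small : s4 < 0.2625 := by
      have : α / 4 ≤ Real.pi / 12 := by linarith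
      nlinarith
    have hc4le : c4 ≤ 1 := Real.cos_le_one _
    have hc2 : Real.sqrt 3 / 2 ≤ c2 := by
      rw [hc2d, ← Real.cos_pi_div_six]
      exact Real.cos_le_cos_of_nonneg_of_le_pi (by linarith) (by linarith) (by linarith)
    have hc4 : Real.sqrt 3 / 2 ≤ c4 := by
      rw [hc4d, ← Real.cos_pi_div_six]
      exact Real.cos_le_cos_of_nonneg_of_le_pi (by linarith) (by linarith) (by linarith)
    have hs2 : s2 = 2 * s4 * c4 := by
      rw [hs2d, hs4d, hc4d, show α / 2 = 2 * (α / 4) by ring, Real.sin_two_mul]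
    have hsq3 : Real.sqrt 3 ^ 2 = 3 := Real.sq_sqrt (by norm_num)
    have hsq3lb : (1.7 : ℝ) < Real.sqrt 3 := by
      nlinarith [Real.sqrt_nonneg 3]
    rw [hs2]
    have hc4pos : (0:ℝ) < c4 := by nlinarith
    have hc2pos : (0:ℝ) < c2 := by nlinarith
    have hcc : (3:ℝ)/4 ≤ c4 * c2 := by
      nlinarith [mul_nonneg (sub_nonneg.2 hc4) (sub_nonneg.2 hc2)]
    have hB : (1.275 : ℝ) ≤ Real.sqrt 3 * (c4 * c2) := by
      nlinarith [mul_le_mul_of_nonneg_left hcc (Real.sqrt_nonneg 3)]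
    have hA : 2 * s4 * 1.275 ≤ 2 * s4 * (Real.sqrt 3 * (c4 * c2)) :=
      mul_le_mul_of_nonneg_left hB (by linarith)
    have hE : Real.sqrt 3 * (2 * s4 * c4) * c2 = 2 * s4 * (Real.sqrt 3 * (c4 * c2)) := by ring
    have hC : (2 * s4 * c4) ^ 2 + s4 ^ 2 ≤ 5 * s4 ^ 2 := by
      have hc4sq : c4 ^ 2 ≤ 1 := by nlinarith
      nlinarith [mul_nonneg (sq_nonneg s4) (sub_nonneg.2 hc4sq)]
    have hD : 5 * s4 ^ 2 < 2 * s4 * 1.275 := by nlinarith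
    linarith
end

section
/- Let p be an odd prime, n ≥ 0, and m = pⁿ. Let A be an m × m integer matrix that is circulant, i.e., A_{i,j} = a_{i−j} for some function a : ℤ/mℤ → ℤ (indices taken modulo m). If the content ∑_{i ∈ ℤ/mℤ} a_i of A is not congruent to 0 modulo p, then A has maximal rank; equivalently, det A ≠ 0. -/
open Matrix Polynomial Fin.NatCast

lemma circ_single_mul {m : ℕ} [NeZero m] {R : Type*} [CommRing R] (i j : Fin m) :
    (circulant (Pi.single i (1:R))) * circulant (Pi.single j 1) =
      circulant (Pi.single (i + j) 1) := by
  rw [circulant_mul]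
  congr 1
  ext k
  simp only [mulVec_single, circulant_apply]
  rw [MulOpposite.op_one, one_smul, col_apply, circulant_apply]
  simp only [Pi.single_apply]
  congr 1
  simp only [eq_iff_iff]
  rw [sub_eq_iff_eq_add]

lemma circ_sum {m : ℕ} {R : Type*} [CommRing R] {ι : Type*} (s : Finset ι)
    (w : ι → Fin m → R) : circulant (∑ k ∈ s, w k) = ∑ k ∈ s, circulant (w k) := by
  ext i j
  simp [circulant_apply, Matrix.sum_apply]

/-- an integer circulant matrix of size `pⁿ` (`p` an odd prime) whose content
(the sum of the entries of a column) is not divisible by `p` has nonzero determinant, i.e.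
maximal rank. -/
theorem stmt12 (p : ℕ) (hp : p.Prime) (hodd : Odd p) (n m : ℕ) (hm : m = p ^ n)
    (a : Fin m → ℤ) (hcontent : ¬ ((p : ℤ) ∣ ∑ i, a i)) :
    (Matrix.circulant a).det ≠ 0 := by
  haveI : Fact p.Prime := ⟨hp⟩
  haveI : NeZero m := ⟨by rw [hm]; exact pow_ne_zero n hp.ne_zero⟩
  intro hdet
  set b : Fin m → ZMod p := fun i => (a i : ZMod p) with hb
  have hdetp : (circulant b).det = 0 := by
    have h1 := congrArg (Int.castRingHom (ZMod p)) hdet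
    rw [map_zero, RingHom.map_det, RingHom.mapMatrix_apply, map_circulant] at h1
    exact h1
  set c : ZMod p := ∑ i, b i with hc
  have hc0 : c ≠ 0 := by
    intro h0
    apply hcontent
    rw [← ZMod.intCast_zmod_eq_zero_iff_dvd]
    rw [hc, hb] at h0
    push_cast at h0 ⊢
    exact h0
  set S : Matrix (Fin m) (Fin m) (ZMod p) := circulant (Pi.single 1 1) with hS
  have hSk : ∀ k : ℕ, S ^ k = circulant (Pi.single ((k : Fin m)) 1) := by
    intro k
    induction k with
    | zero => simp
    | succ k ih =>
        rw [pow_succ, ih, hS, circulant_mul_comm, circ_single_mul]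
        congr 2
        push_cast
        abel
  set P : Polynomial (ZMod p) := ∑ k : Fin m, C (b k) * X ^ (k : ℕ) with hP
  have haeval : aeval S P = circulant b := by
    rw [hP, map_sum]
    have key : ∀ k : Fin m, aeval S (C (b k) * X ^ (k : ℕ))
        = circulant (Pi.single k (b k)) := by
      intro k
      rw [_root_.map_mul, aeval_C, aeval_X_pow, hSk, Fin.cast_val_eq_self,
        Algebra.algebraMap_eq_smul_one, smul_mul_assoc, one_mul, ← circulant_smul]
      congr 1
      ext j
      simp [Pi.single_apply]
    simp_rw [key]
    rw [← circ_sum, Finset.univ_sum_single]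
  have heval1 : P.eval 1 = c := by
    rw [hP]
    simp [eval_finset_sum, hc]
  obtain ⟨R, hR⟩ : (X - C 1) ∣ (P - C c) := by
    rw [dvd_iff_isRoot]
    simp [IsRoot, heval1]
  set N : Matrix (Fin m) (Fin m) (ZMod p) := aeval S (P - C c) with hN
  have hXm : (X - C (1 : ZMod p)) ^ m = X ^ m - 1 := by
    rw [hm, sub_pow_char_pow]
    simp
  have hnil : N ^ m = 0 := by
    rw [hN, ← map_pow, hR, mul_pow, hXm, _root_.map_mul, map_sub, map_pow,
      aeval_X, _root_.map_one, hSk, Fin.natCast_self, circulant_single_one, sub_self,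
      zero_mul]
  have hunit : IsUnit (circulant b) := by
    have h1 : circulant b = aeval S (C c) + N := by
      rw [hN, ← map_add, add_sub_cancel, haeval]
    rw [h1]
    refine IsNilpotent.isUnit_add_left_of_commute ⟨m, hnil⟩ ?_ ?_
    · rw [aeval_C]
      exact hc0.isUnit.map (algebraMap (ZMod p) (Matrix (Fin m) (Fin m) (ZMod p)))
    · rw [aeval_C]
      exact (Algebra.commutes c N).symm
  exact ((Matrix.isUnit_iff_isUnit_det _).mp hunit).ne_zero hdetp
end
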